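/- arXiv:0912.2986 — 2 statements merged into one kernel-verified Lean document; each statement's English description precedes it below -/
import Mathlib

section
/- The curve C = {(cos θ, sin 2θ, cos 3θ) : θ ∈ ℝ} ⊂ ℝ³ is exactly the set of real points satisfying x² - y² - xz = 0, z - 4x³ + 3x = 0, and -1 ≤ x ≤ 1. -/
open Real

/-!
On the curve, `z = cos 3θ = 4x³ - 3x` and `y² = sin² 2θ = 4x²(1 - x²)`, which together give
`x² - y² - xz = 0`. Conversely, for `x ∈ [-1, 1]` the angle `θ = arccos x` has the right cosine,
and `θ` or `-θ` gives the right sign of `y`; `z` is then forced by the cubic equation.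
-/

lemma exists_cos_eq_and_sin_two_mul_eq_of_sq_eq {θ x y : ℝ} (hx : cos θ = x)
    (hy : y ^ 2 = sin (2 * θ) ^ 2) : ∃ φ, cos φ = x ∧ sin (2 * φ) = y := by
  rcases sq_eq_sq_iff_eq_or_eq_neg.1 hy with rfl | rfl
  · exact ⟨θ, hx, rfl⟩
  · exact ⟨-θ, by rwa [cos_neg], by rw [mul_neg, sin_neg]⟩

lemma sin_two_mul_sq_eq (θ : ℝ) : sin (2 * θ) ^ 2 = 4 * cos θ ^ 2 * (1 - cos θ ^ 2) := by
  rw [sin_two_mul, ← sin_sq]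
  ring

/-- The curve `{(cos θ, sin 2θ, cos 3θ) : θ ∈ ℝ}` is exactly the set of real points
satisfying `x² - y² - xz = 0`, `z - 4x³ + 3x = 0` and `-1 ≤ x ≤ 1`. -/
theorem trig_curve_eq_real_variety :
    {p : ℝ × ℝ × ℝ | ∃ θ : ℝ, p = (cos θ, sin (2 * θ), cos (3 * θ))} =
      {p : ℝ × ℝ × ℝ |
        p.1 ^ 2 - p.2.1 ^ 2 - p.1 * p.2.2 = 0 ∧
        p.2.2 - 4 * p.1 ^ 3 + 3 * p.1 = 0 ∧
        -1 ≤ p.1 ∧ p.1 ≤ 1} := by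
  ext ⟨x, y, z⟩
  simp only [Set.mem_ofPred_eq, Prod.mk.injEq]
  constructor
  · rintro ⟨θ, rfl, rfl, rfl⟩
    refine ⟨?_, by rw [cos_three_mul]; ring, neg_one_le_cos θ, cos_le_one θ⟩
    rw [sin_two_mul_sq_eq, cos_three_mul]
    ring
  · rintro ⟨h1, h2, hx1, hx2⟩
    have hz : z = 4 * x ^ 3 - 3 * x := by linarith
    have hy : y ^ 2 = sin (2 * arccos x) ^ 2 := by
      rw [sin_two_mul_sq_eq, cos_arccos hx1 hx2]
      subst hz
      linear_combination -h1
    obtain ⟨φ, rfl, rfl⟩ := exists_cos_eq_and_sin_two_mul_eq_of_sq_eq (cos_arccos hx1 hx2) hy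
    exact ⟨φ, rfl, rfl, by rw [hz, cos_three_mul]⟩
end

section
/- Over ℝ, the quartic polynomial 13225x⁴+58880x³y+91986x²y²-638976x²z²+13225y⁴+58880xy³-1148160xyz²-638976y²z²+6230016z⁴+449280x²z-449280y²z-409600x²-736000xy-409600y²-7987200z²+2560000 factors as a nonzero constant times a product of four real linear polynomials (each of the form 1 + αx + βy + γz with real α, β, γ), but it is irreducible over ℚ. -/
open MvPolynomial

/-- The essential quartic factor of the Chow form of tritangent planes of Morton's
trefoil, with coefficients in a commutative ring. Variables: `X 0 = x`, `X 1 = y`,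
`X 2 = z`. -/
noncomputable def mortonQuartic (R : Type*) [CommRing R] : MvPolynomial (Fin 3) R :=
  C 13225 * X 0 ^ 4 + C 58880 * X 0 ^ 3 * X 1 + C 91986 * X 0 ^ 2 * X 1 ^ 2
    - C 638976 * X 0 ^ 2 * X 2 ^ 2 + C 13225 * X 1 ^ 4 + C 58880 * X 0 * X 1 ^ 3
    - C 1148160 * X 0 * X 1 * X 2 ^ 2 - C 638976 * X 1 ^ 2 * X 2 ^ 2
    + C 6230016 * X 2 ^ 4 + C 449280 * X 0 ^ 2 * X 2 - C 449280 * X 1 ^ 2 * X 2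
    - C 409600 * X 0 ^ 2 - C 736000 * X 0 * X 1 - C 409600 * X 1 ^ 2
    - C 7987200 * X 2 ^ 2 + C 2560000

lemma noRatSq (n a : ℕ) (h1 : a*a < n) (h2 : n < (a+1)*(a+1)) (q : ℚ) : q^2 ≠ n := by
  intro h
  have hs : IsSquare ((n:ℚ)) := ⟨q, by rw [← h]; ring⟩
  rw [Rat.isSquare_natCast_iff] at hs
  obtain ⟨r, rfl⟩ := hs
  rcases le_or_gt r a with hr | hr
  · nlinarith
  · nlinarith

/-- The specialized quartic `F = X⁴ - (16384/529)X² + 102400/529` (monic). -/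
noncomputable def Fq : Polynomial ℚ :=
  Polynomial.X^4 + Polynomial.C (-16384/529 : ℚ) * Polynomial.X^2 + Polynomial.C (102400/529 : ℚ)

lemma Fq_natDegree : Fq.natDegree = 4 := by
  unfold Fq; compute_degree!

lemma Fq_monic : Fq.Monic := by
  unfold Polynomial.Monic Polynomial.leadingCoeff
  rw [Fq_natDegree]
  unfold Fq
  simp [Polynomial.coeff_X_pow]

lemma Fq_no_root (r : ℚ) : ¬ Fq.IsRoot r := by
  intro hr
  have h : r^4 + (-16384/529)*r^2 + 102400/529 = 0 := by
    simpa [Fq, Polynomial.IsRoot] using hr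
  have key : (529*(2*r^2 + (-16384/529)))^2 = (51757056 : ℚ) := by
    linear_combination (1119364 : ℚ) * h
  exact noRatSq 51757056 7194 (by norm_num) (by norm_num) _ key

lemma monic_deg_two_form (g : Polynomial ℚ) (hm : g.Monic) (h2 : g.natDegree = 2) :
    g = Polynomial.X^2 + Polynomial.C (g.coeff 1) * Polynomial.X + Polynomial.C (g.coeff 0) := by
  ext n
  have hlead : g.coeff 2 = 1 := by
    have := hm.coeff_natDegree
    rwa [h2] at this
  match n with
  | 0 => simp
  | 1 => simp
  | 2 => simp [Polynomial.coeff_X_pow, hlead]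
  | (m+3) =>
      rw [Polynomial.coeff_eq_zero_of_natDegree_lt (by omega : g.natDegree < m + 3)]
      simp [Polynomial.coeff_X_pow]

lemma Fq_irreducible : Irreducible Fq := by
  constructor
  · intro hu
    have := Polynomial.natDegree_eq_zero_of_isUnit hu
    rw [Fq_natDegree] at this
    omega
  · intro g h hgh
    by_contra hcon
    push_neg at hcon
    obtain ⟨hgu, hhu⟩ := hcon
    have hF0 : Fq ≠ 0 := Fq_monic.ne_zero
    have hg0 : g ≠ 0 := by rintro rfl; simp at hgh; exact hF0 hgh
    have hh0 : h ≠ 0 := by rintro rfl; simp at hgh; exact hF0 hgh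
    have hdeg : g.natDegree + h.natDegree = 4 := by
      rw [← Polynomial.natDegree_mul hg0 hh0, ← hgh, Fq_natDegree]
    have hgpos : g.natDegree ≠ 0 := by
      intro h0
      obtain ⟨c, hc⟩ := Polynomial.natDegree_eq_zero.mp h0
      apply hgu
      rw [← hc]
      exact Polynomial.isUnit_C.mpr (isUnit_iff_ne_zero.mpr (by rintro rfl; simp at hc; exact hg0 hc.symm))
    have hhpos : h.natDegree ≠ 0 := by
      intro h0
      obtain ⟨c, hc⟩ := Polynomial.natDegree_eq_zero.mp h0
      apply hhu
      rw [← hc]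
      exact Polynomial.isUnit_C.mpr (isUnit_iff_ne_zero.mpr (by rintro rfl; simp at hc; exact hh0 hc.symm))
    -- get a root if either factor has degree 1
    have root_case : ∀ p : Polynomial ℚ, p ∣ Fq → p ≠ 0 → p.natDegree = 1 → False := by
      intro p hp hp0 hp1
      obtain ⟨r, hr⟩ := Polynomial.exists_root_of_degree_eq_one
        (by rw [Polynomial.degree_eq_natDegree hp0, hp1]; rfl)
      exact Fq_no_root r (hr.dvd hp)
    rcases (by omega : g.natDegree = 1 ∨ g.natDegree = 3 ∨ g.natDegree = 2) with h1 | h3 | hq2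
    · exact root_case g ⟨h, hgh⟩ hg0 h1
    · exact root_case h ⟨g, by rw [hgh]; ring⟩ hh0 (by omega)
    -- quadratic * quadratic
    have hh2 : h.natDegree = 2 := by omega
    set lg := g.leadingCoeff with hlg
    set lh := h.leadingCoeff with hlh
    have hlc : lg * lh = 1 := by
      have : Fq.leadingCoeff = lg * lh := by rw [hgh, Polynomial.leadingCoeff_mul]
      rw [Fq_monic.leadingCoeff] at this
      exact this.symm
    have hlh0 : lh ≠ 0 := Polynomial.leadingCoeff_ne_zero.mpr hh0
    have hlg0 : lg ≠ 0 := Polynomial.leadingCoeff_ne_zero.mpr hg0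
    set g' := Polynomial.C lh * g with hg'
    set h' := Polynomial.C lg * h with hh'
    have hgh' : Fq = g' * h' := by
      have hgh'' : g' * h' = Polynomial.C lg * Polynomial.C lh * (g * h) := by
        rw [hg', hh']; ring
      rw [hgh'', ← map_mul, hlc, map_one, one_mul, hgh]
    have hg'm : g'.Monic := by
      unfold Polynomial.Monic
      rw [hg', Polynomial.leadingCoeff_mul, Polynomial.leadingCoeff_C, mul_comm]
      exact hlc
    have hh'm : h'.Monic := by
      unfold Polynomial.Monic
      rw [hh', Polynomial.leadingCoeff_mul, Polynomial.leadingCoeff_C]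
      exact hlc
    have hg'2 : g'.natDegree = 2 := by rw [hg', Polynomial.natDegree_C_mul hlh0, hq2]
    have hh'2 : h'.natDegree = 2 := by rw [hh', Polynomial.natDegree_C_mul hlg0, hh2]
    obtain ⟨b, c, hgf⟩ : ∃ b c, g' = Polynomial.X^2 + Polynomial.C b * Polynomial.X
        + Polynomial.C c := ⟨_, _, monic_deg_two_form g' hg'm hg'2⟩
    obtain ⟨d, e, hhf⟩ : ∃ d e, h' = Polynomial.X^2 + Polynomial.C d * Polynomial.X
        + Polynomial.C e := ⟨_, _, monic_deg_two_form h' hh'm hh'2⟩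
    rw [hgf, hhf] at hgh'
    have hexp : (Polynomial.X^2 + Polynomial.C b * Polynomial.X + Polynomial.C c) *
        (Polynomial.X^2 + Polynomial.C d * Polynomial.X + Polynomial.C e)
        = Polynomial.X^4 + Polynomial.C (b+d) * Polynomial.X^3
          + Polynomial.C (c+e+b*d) * Polynomial.X^2
          + Polynomial.C (b*e+c*d) * Polynomial.X + Polynomial.C (c*e) := by
      simp only [map_add, map_mul]
      ring
    rw [hexp] at hgh'
    unfold Fq at hgh'
    have e3 : (0:ℚ) = b + d := by
      have h' := congrArg (fun p => Polynomial.coeff p 3) hgh'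
      simp only [Polynomial.coeff_add, Polynomial.coeff_C_mul, Polynomial.coeff_X_pow,
        Polynomial.coeff_X, Polynomial.coeff_C] at h'
      norm_num at h'
      linarith [h']
    have e2 : (-16384/529 : ℚ) = c + e + b*d := by
      have h' := congrArg (fun p => Polynomial.coeff p 2) hgh'
      simp only [Polynomial.coeff_add, Polynomial.coeff_C_mul, Polynomial.coeff_X_pow,
        Polynomial.coeff_X, Polynomial.coeff_C] at h'
      norm_num at h'
      linarith [h']
    have e1 : (0:ℚ) = b*e + c*d := by
      have h' := congrArg (fun p => Polynomial.coeff p 1) hgh'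
      simp only [Polynomial.coeff_add, Polynomial.coeff_C_mul, Polynomial.coeff_X_pow,
        Polynomial.coeff_X, Polynomial.coeff_C] at h'
      norm_num at h'
      linarith [h']
    have e0 : (102400/529 : ℚ) = c * e := by
      have h' := congrArg (fun p => Polynomial.coeff p 0) hgh'
      simp only [Polynomial.coeff_add, Polynomial.coeff_C_mul, Polynomial.coeff_X_pow,
        Polynomial.coeff_X, Polynomial.coeff_C] at h'
      norm_num at h'
      linarith [h']
    have hd : d = -b := by linarith
    subst hd
    have hbe : b * (e - c) = 0 := by linear_combination -e1
    rcases mul_eq_zero.mp hbe with hb | hec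
    · -- b = 0 : c+e = P, ce = Q
      subst hb
      have key : (529*(c - e))^2 = (51757056:ℚ) := by
        linear_combination (-279841*(c+e) + 8667136 : ℚ) * e2 + (1119364 : ℚ) * e0
      exact noRatSq 51757056 7194 (by norm_num) (by norm_num) _ key
    · -- e = c : c² = Q
      have hec' : e = c := by linarith
      subst hec'
      have hc2 : (23*e - 320) * (23*e + 320) = 0 := by linear_combination (-529 : ℚ) * e0
      rcases mul_eq_zero.mp hc2 with hc | hc
      · have hcv : e = 320/23 := by linarith
        rw [hcv] at e2
        have key : (23*b)^2 = (31104:ℚ) := by linear_combination (529 : ℚ) * e2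
        exact noRatSq 31104 176 (by norm_num) (by norm_num) _ key
      · have hcv : e = -320/23 := by linarith
        rw [hcv] at e2
        have key : (23*b)^2 = (1664:ℚ) := by linear_combination (529 : ℚ) * e2
        exact noRatSq 1664 40 (by norm_num) (by norm_num) _ key

noncomputable def psiHom : MvPolynomial (Fin 3) ℚ →ₐ[ℚ] Polynomial ℚ :=
  aeval ![Polynomial.X, 0, 0]

noncomputable def PhiHom : MvPolynomial (Fin 3) ℚ →ₐ[ℚ] Polynomial ℚ :=
  (Polynomial.mapAlgHom (MvPolynomial.aeval (fun _ => (0:ℚ)))).comp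
    (MvPolynomial.finSuccEquiv ℚ 2).toAlgHom

lemma fse_X1 : (MvPolynomial.finSuccEquiv ℚ 2) (X 1) = Polynomial.C (X 0) := by
  have h : (1 : Fin 3) = Fin.succ 0 := rfl
  rw [h, MvPolynomial.finSuccEquiv_X_succ]

lemma fse_X2 : (MvPolynomial.finSuccEquiv ℚ 2) (X 2) = Polynomial.C (X 1) := by
  have h : (2 : Fin 3) = Fin.succ 1 := rfl
  rw [h, MvPolynomial.finSuccEquiv_X_succ]

lemma fse_C (r : ℚ) : (MvPolynomial.finSuccEquiv ℚ 2) (C r) = Polynomial.C (C r) := by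
  simp [MvPolynomial.finSuccEquiv_apply]

lemma psi_eq_Phi : psiHom = PhiHom := by
  apply MvPolynomial.algHom_ext
  intro i
  fin_cases i
  · simp [psiHom, PhiHom, MvPolynomial.finSuccEquiv_X_zero]
  · simp [psiHom, PhiHom, fse_X1]
  · simp [psiHom, PhiHom, fse_X2]

lemma psi_morton : psiHom (mortonQuartic ℚ) = Polynomial.C (13225:ℚ) * Fq := by
  have h2 : Polynomial.C (13225:ℚ) * Fq
      = Polynomial.C (13225:ℚ) * Polynomial.X^4 + Polynomial.C (-409600:ℚ) * Polynomial.X^2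
        + Polynomial.C (2560000:ℚ) := by
    simp only [Fq, mul_add, ← mul_assoc, ← Polynomial.C_mul]
    norm_num
  rw [h2]
  simp only [psiHom, mortonQuartic, map_add, map_sub, map_mul, map_pow, map_one, aeval_X, aeval_C,
    Matrix.cons_val_zero, Matrix.cons_val_one, Matrix.head_cons, Matrix.cons_val_two,
    Matrix.tail_cons, Polynomial.algebraMap_eq, map_neg]
  ring

/-- explicit form of the image under `finSuccEquiv`. -/
lemma e_morton : (MvPolynomial.finSuccEquiv ℚ 2) (mortonQuartic ℚ) =
    Polynomial.C (C 13225) * Polynomial.X^4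
    + Polynomial.C (C 58880 * X 0) * Polynomial.X^3
    + Polynomial.C (C 91986 * X 0^2 - C 638976 * X 1^2 + C 449280 * X 1 - C 409600)
        * Polynomial.X^2
    + Polynomial.C (C 58880 * X 0^3 - C 1148160 * X 0 * X 1^2 - C 736000 * X 0) * Polynomial.X
    + Polynomial.C (C 13225 * X 0^4 - C 638976 * X 0^2 * X 1^2 + C 6230016 * X 1^4
        - C 449280 * X 0^2 * X 1 - C 409600 * X 0^2 - C 7987200 * X 1^2 + C 2560000) := by
  simp only [mortonQuartic, map_add, map_sub, map_mul, map_pow, fse_C,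
    MvPolynomial.finSuccEquiv_X_zero, fse_X1, fse_X2]
  ring

lemma psi_morton_irred : Irreducible (psiHom (mortonQuartic ℚ)) := by
  rw [psi_morton]
  have hu : IsUnit (Polynomial.C (13225:ℚ)) := Polynomial.isUnit_C.mpr (by norm_num)
  have hassoc : Associated Fq (Polynomial.C (13225:ℚ) * Fq) :=
    ⟨hu.unit, by rw [IsUnit.unit_spec]; ring⟩
  exact hassoc.irreducible Fq_irreducible

lemma key_unit (a b : MvPolynomial (Fin 3) ℚ) (hab : mortonQuartic ℚ = a * b)
    (hua : IsUnit (psiHom a)) : IsUnit a := by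
  have hmul : psiHom (mortonQuartic ℚ) = psiHom a * psiHom b := by rw [hab, map_mul]
  have hb0 : psiHom b ≠ 0 := by
    intro h
    exact psi_morton_irred.ne_zero (by rw [hmul, h, mul_zero])
  have ha0' : psiHom a ≠ 0 := hua.ne_zero
  have hnb : (psiHom b).natDegree = 4 := by
    have h4 : (psiHom (mortonQuartic ℚ)).natDegree = 4 := by
      rw [psi_morton, Polynomial.natDegree_C_mul (by norm_num), Fq_natDegree]
    rw [hmul, Polynomial.natDegree_mul ha0' hb0,
      Polynomial.natDegree_eq_zero_of_isUnit hua] at h4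
    simpa using h4
  have hb4 : 4 ≤ ((MvPolynomial.finSuccEquiv ℚ 2) b).natDegree := by
    have hphi : psiHom b = Polynomial.map (MvPolynomial.aeval (fun _ => (0:ℚ))).toRingHom
        ((MvPolynomial.finSuccEquiv ℚ 2) b) := by
      rw [psi_eq_Phi]
      simp [PhiHom]
    rw [← hnb, hphi]
    exact Polynomial.natDegree_map_le
  have hEp : ((MvPolynomial.finSuccEquiv ℚ 2) (mortonQuartic ℚ)).natDegree ≤ 4 := by
    rw [e_morton]
    compute_degree
  have hEa0 : (MvPolynomial.finSuccEquiv ℚ 2) a ≠ 0 := by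
    intro h
    rw [EmbeddingLike.map_eq_zero_iff] at h
    exact ha0' (by rw [h, map_zero])
  have hEb0 : (MvPolynomial.finSuccEquiv ℚ 2) b ≠ 0 := by
    intro h
    rw [EmbeddingLike.map_eq_zero_iff] at h
    exact hb0 (by rw [h, map_zero])
  have hEmul : (MvPolynomial.finSuccEquiv ℚ 2) (mortonQuartic ℚ)
      = (MvPolynomial.finSuccEquiv ℚ 2) a * (MvPolynomial.finSuccEquiv ℚ 2) b := by
    rw [hab, map_mul]
  have hEa_deg : ((MvPolynomial.finSuccEquiv ℚ 2) a).natDegree = 0 := by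
    have hsum := Polynomial.natDegree_mul hEa0 hEb0
    rw [← hEmul] at hsum
    omega
  obtain ⟨a0, ha0eq⟩ := Polynomial.natDegree_eq_zero.mp hEa_deg
  have hcoeff : (C 13225 : MvPolynomial (Fin 2) ℚ)
      = a0 * ((MvPolynomial.finSuccEquiv ℚ 2) b).coeff 4 := by
    have h4 := congrArg (fun q => q.coeff 4) hEmul
    rw [e_morton, ← ha0eq] at h4
    simp only [Polynomial.coeff_add, Polynomial.coeff_C_mul, Polynomial.coeff_X_pow,
      Polynomial.coeff_X, Polynomial.coeff_C] at h4
    norm_num at h4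
    exact h4
  have hu13 : IsUnit (C 13225 : MvPolynomial (Fin 2) ℚ) :=
    (isUnit_iff_ne_zero.mpr (by norm_num : (13225:ℚ) ≠ 0)).map
      (C : ℚ →+* MvPolynomial (Fin 2) ℚ)
  have hu0 : IsUnit a0 := isUnit_of_dvd_unit ⟨_, hcoeff⟩ hu13
  have huEa : IsUnit ((MvPolynomial.finSuccEquiv ℚ 2) a) := by
    rw [← ha0eq]
    exact hu0.map (Polynomial.C : MvPolynomial (Fin 2) ℚ →+* _)
  have := huEa.map (MvPolynomial.finSuccEquiv ℚ 2).symm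
  rwa [AlgEquiv.symm_apply_apply] at this

theorem morton_rat_irreducible : Irreducible (mortonQuartic ℚ) := by
  constructor
  · intro hu
    exact psi_morton_irred.not_isUnit (hu.map psiHom)
  · intro a b hab
    rcases psi_morton_irred.isUnit_or_isUnit (by rw [hab, map_mul]) with h | h
    · exact Or.inl (key_unit a b hab h)
    · exact Or.inr (key_unit b a (by rw [hab, mul_comm]) h)

lemma morton_real_factorization :
    (∃ (c : ℝ) (α β γ : Fin 4 → ℝ), c ≠ 0 ∧
      mortonQuartic ℝ =
        C c * ∏ i : Fin 4, (1 + C (α i) * X 0 + C (β i) * X 1 + C (γ i) * X 2)) := by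
  set s : ℝ := Real.sqrt 6 with hs_def
  set t : ℝ := Real.sqrt 26 with ht_def
  have hs : s ^ 2 = 6 := Real.sq_sqrt (by norm_num)
  have ht : t ^ 2 = 26 := Real.sq_sqrt (by norm_num)
  refine ⟨2560000,
    ![(9*s+t)/80, -((9*s+t)/80), (9*s-t)/80, -((9*s-t)/80)],
    ![(9*s-t)/80, -((9*s-t)/80), (9*s+t)/80, -((9*s+t)/80)],
    ![s*t/10, s*t/10, -(s*t/10), -(s*t/10)], by norm_num, ?_⟩
  apply MvPolynomial.funext
  intro v
  rw [Fin.prod_univ_four]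
  simp only [mortonQuartic, map_add, map_sub, map_mul, map_pow, map_one, eval_C, eval_X,
    Matrix.cons_val_zero, Matrix.cons_val_one, Matrix.head_cons, Matrix.cons_val_two,
    Matrix.tail_cons, Matrix.cons_val_three, Matrix.head_fin_const]
  linear_combination
    ((51200 : ℝ) * v 2 ^ 2 * t ^ 2 + (-1536 : ℝ) * v 2 ^ 4 * t ^ 4 + (-256 : ℝ) * v 2 ^ 4 * s ^ 2 * t ^ 4 + (64800 : ℝ) * v 1 ^ 2 + (2880 : ℝ) * v 1 ^ 2 * v 2 * t ^ 2 + (3888 : ℝ) * v 1 ^ 2 * v 2 ^ 2 * t ^ 2 + (8 : ℝ) * v 1 ^ 2 * v 2 ^ 2 * t ^ 4 + (648 : ℝ) * v 1 ^ 2 * v 2 ^ 2 * s ^ 2 * t ^ 2 + (-19683/8 : ℝ) * v 1 ^ 4 + (81/8 : ℝ) * v 1 ^ 4 * t ^ 2 + (-6561/16 : ℝ) * v 1 ^ 4 * s ^ 2 + (129600 : ℝ) * v 0 * v 1 + (7776 : ℝ) * v 0 * v 1 * v 2 ^ 2 * t ^ 2 + (-16 : ℝ) * v 0 * v 1 * v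 2 ^ 2 * t ^ 4 + (1296 : ℝ) * v 0 * v 1 * v 2 ^ 2 * s ^ 2 * t ^ 2 + (-19683/2 : ℝ) * v 0 * v 1 ^ 3 + (-6561/4 : ℝ) * v 0 * v 1 ^ 3 * s ^ 2 + (64800 : ℝ) * v 0 ^ 2 + (-2880 : ℝ) * v 0 ^ 2 * v 2 * t ^ 2 + (3888 : ℝ) * v 0 ^ 2 * v 2 ^ 2 * t ^ 2 + (8 : ℝ) * v 0 ^ 2 * v 2 ^ 2 * t ^ 4 + (648 : ℝ) * v 0 ^ 2 * v 2 ^ 2 * s ^ 2 * t ^ 2 + (-59049/4 : ℝ) * v 0 ^ 2 * v 1 ^ 2 + (-81/4 : ℝ) * v 0 ^ 2 * v 1 ^ 2 * t ^ 2 + (-19683/8 : ℝ) * v 0 ^ 2 * v 1 ^ 2 * s ^ 2 + (-19683/2 : ℝ) * v 0 ^ 3 * v 1 + (-6561/4 : ℝ) * v 0 ^ 3 * v 1 * s ^ 2 + (-19683/8 : ℝ) * v 0 ^ 4 + (81/8 : ℝ) * v 0 ^ 4 * t ^ 2 + (-6561/16 : ℝ) * v 0 ^ 4 * s ^ 2)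 * hs +
    ((307200 : ℝ) * v 2 ^ 2 + (-239616 : ℝ) * v 2 ^ 4 + (-9216 : ℝ) * v 2 ^ 4 * t ^ 2 + (800 : ℝ) * v 1 ^ 2 + (17280 : ℝ) * v 1 ^ 2 * v 2 + (24576 : ℝ) * v 1 ^ 2 * v 2 ^ 2 + (48 : ℝ) * v 1 ^ 2 * v 2 ^ 2 * t ^ 2 + (473/8 : ℝ) * v 1 ^ 4 + (-1/16 : ℝ) * v 1 ^ 4 * t ^ 2 + (-1600 : ℝ) * v 0 * v 1 + (44160 : ℝ) * v 0 * v 1 * v 2 ^ 2 + (-96 : ℝ) * v 0 * v 1 * v 2 ^ 2 * t ^ 2 + (13/2 : ℝ) * v 0 * v 1 ^ 3 + (1/4 : ℝ) * v 0 * v 1 ^ 3 * t ^ 2 + (800 : ℝ) * v 0 ^ 2 + (-17280 : ℝ) * v 0 ^ 2 * v 2 + (24576 : ℝ) * v 0 ^ 2 * v 2 ^ 2 + (48 : ℝ) * v 0 ^ 2 * v 2 ^ 2 * t ^ 2 + (-525/4 : ℝ) * v 0 ^ 2 * v 1 ^ 2 + (-3/8 : ℝ) * v 0 ^ 2 * v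 1 ^ 2 * t ^ 2 + (13/2 : ℝ) * v 0 ^ 3 * v 1 + (1/4 : ℝ) * v 0 ^ 3 * v 1 * t ^ 2 + (473/8 : ℝ) * v 0 ^ 4 + (-1/16 : ℝ) * v 0 ^ 4 * t ^ 2) * ht

/-- Over `ℝ`, the Morton quartic factors as a nonzero constant times a product of
four real affine-linear polynomials `1 + αx + βy + γz`, but it is irreducible
over `ℚ`. -/
theorem morton_quartic_factorization :
    (∃ (c : ℝ) (α β γ : Fin 4 → ℝ), c ≠ 0 ∧
      mortonQuartic ℝ =
        C c * ∏ i : Fin 4, (1 + C (α i) * X 0 + C (β i) * X 1 + C (γ i) * X 2)) ∧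
    Irreducible (mortonQuartic ℚ) := by
  exact ⟨morton_real_factorization, morton_rat_irreducible⟩
end
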